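/- arXiv:2404.00544 — 2 statements merged into one kernel-verified Lean document; each statement's English description precedes it below -/
import Mathlib

section
/- Let A ∈ ℝ^{n×n} have singular value decomposition A = UΣVᵀ with U, V ∈ O(n) and Σ diagonal with strictly decreasing positive entries. Then the orthogonal matrix R = UVᵀ minimizes the Frobenius distance ‖A − R‖_F over all R ∈ O(n). -/
open Matrix

/-- Frobenius norm of a real square matrix. -/
noncomputable def frobNorm {n : ℕ} (A : Matrix (Fin n) (Fin n) ℝ) : ℝ :=
  Real.sqrt (∑ i, ∑ j, (A i j) ^ 2)

private lemma sqsum_eq_trace {n : ℕ} (M : Matrix (Fin n) (Fin n) ℝ) :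
    ∑ i, ∑ j, (M i j)^2 = (Mᵀ * M).trace := by
  rw [Finset.sum_comm]
  simp [Matrix.trace, Matrix.diag, Matrix.mul_apply, sq]

private lemma cancel_left {n : ℕ} {P : Matrix (Fin n) (Fin n) ℝ} (h : P * Pᵀ = 1)
    (X : Matrix (Fin n) (Fin n) ℝ) : P * (Pᵀ * X) = X := by
  rw [← Matrix.mul_assoc, h, Matrix.one_mul]

private lemma cancel_left' {n : ℕ} {P : Matrix (Fin n) (Fin n) ℝ} (h : Pᵀ * P = 1)
    (X : Matrix (Fin n) (Fin n) ℝ) : Pᵀ * (P * X) = X := by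
  rw [← Matrix.mul_assoc, h, Matrix.one_mul]

private lemma trace_diag_mul_le {n : ℕ} (σ : Fin n → ℝ) (hσ : ∀ i, 0 ≤ σ i)
    (Q : Matrix (Fin n) (Fin n) ℝ) (hQ : Q * Qᵀ = 1) :
    (Matrix.diagonal σ * Q).trace ≤ ∑ i, σ i := by
  have hdiag : (Matrix.diagonal σ * Q).trace = ∑ i, σ i * Q i i := by
    simp [Matrix.trace, Matrix.diag, Matrix.diagonal_mul]
  rw [hdiag]
  apply Finset.sum_le_sum
  intro i _
  have hrow : ∑ j, (Q i j)^2 = 1 := by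
    have := congrFun (congrFun hQ i) i
    simpa [Matrix.mul_apply, Matrix.one_apply, sq] using this
  have h1 : (Q i i)^2 ≤ 1 := by
    calc (Q i i)^2 ≤ ∑ j, (Q i j)^2 :=
          Finset.single_le_sum (f := fun j => (Q i j)^2) (fun _ _ => sq_nonneg _)
            (Finset.mem_univ i)
      _ = 1 := hrow
  have h2 : Q i i ≤ 1 := by nlinarith
  calc σ i * Q i i ≤ σ i * 1 := mul_le_mul_of_nonneg_left h2 (hσ i)
    _ = σ i := mul_one _

/-- If `A = U Σ Vᵀ` is an SVD with `U, V ∈ O(n)` and `Σ` diagonal with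
strictly decreasing positive entries, then `R = U Vᵀ` minimizes the Frobenius distance
`‖A − R‖_F` over all `R ∈ O(n)`. -/
theorem svd_orthogonal_procrustes {n : ℕ}
    (A U V : Matrix (Fin n) (Fin n) ℝ) (σ : Fin n → ℝ)
    (hU : U ∈ Matrix.orthogonalGroup (Fin n) ℝ)
    (hV : V ∈ Matrix.orthogonalGroup (Fin n) ℝ)
    (hσpos : ∀ i, 0 < σ i) (hσdec : StrictAnti σ)
    (hA : A = U * Matrix.diagonal σ * Vᵀ) :
    ∀ R ∈ Matrix.orthogonalGroup (Fin n) ℝ,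
      frobNorm (A - U * Vᵀ) ≤ frobNorm (A - R) := by
  intro R hR
  have hU1 : U * Uᵀ = 1 := by simpa using (Matrix.mem_orthogonalGroup_iff (Fin n) ℝ).mp hU
  have hU2 : Uᵀ * U = 1 := by simpa using (Matrix.mem_orthogonalGroup_iff' (Fin n) ℝ).mp hU
  have hV1 : V * Vᵀ = 1 := by simpa using (Matrix.mem_orthogonalGroup_iff (Fin n) ℝ).mp hV
  have hV2 : Vᵀ * V = 1 := by simpa using (Matrix.mem_orthogonalGroup_iff' (Fin n) ℝ).mp hV
  have hR1 : R * Rᵀ = 1 := by simpa using (Matrix.mem_orthogonalGroup_iff (Fin n) ℝ).mp hR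
  have hR2 : Rᵀ * R = 1 := by simpa using (Matrix.mem_orthogonalGroup_iff' (Fin n) ℝ).mp hR
  -- transpose of A
  have hAT : Aᵀ = V * (Matrix.diagonal σ * Uᵀ) := by
    rw [hA]; simp [Matrix.transpose_mul, Matrix.diagonal_transpose, Matrix.mul_assoc]
  -- trace of Aᵀ * B for any B
  have htr : ∀ B : Matrix (Fin n) (Fin n) ℝ,
      (Aᵀ * B).trace = (Matrix.diagonal σ * (Uᵀ * B * V)).trace := by
    intro B
    rw [hAT, Matrix.mul_assoc, Matrix.trace_mul_comm V]
    rw [Matrix.mul_assoc, Matrix.mul_assoc, Matrix.mul_assoc]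
  -- trace with R = U Vᵀ gives exactly ∑ σ
  have hQ1 : Uᵀ * (U * Vᵀ) * V = 1 := by
    rw [cancel_left' hU2, hV2]
  have heq : (Aᵀ * (U * Vᵀ)).trace = ∑ i, σ i := by
    rw [htr, hQ1, Matrix.mul_one, Matrix.trace_diagonal]
  -- trace with general R is at most ∑ σ
  have hQR : (Uᵀ * R * V) * (Uᵀ * R * V)ᵀ = 1 := by
    simp only [Matrix.transpose_mul, Matrix.transpose_transpose, Matrix.mul_assoc]
    rw [cancel_left hV1, cancel_left hR1, hU2]
  have hle : (Aᵀ * R).trace ≤ ∑ i, σ i := by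
    rw [htr]
    exact trace_diag_mul_le σ (fun i => (hσpos i).le) _ hQR
  -- expansion of the squared norm
  have expand : ∀ B : Matrix (Fin n) (Fin n) ℝ,
      ((A - B)ᵀ * (A - B)).trace =
        (Aᵀ * A).trace - 2 * (Aᵀ * B).trace + (Bᵀ * B).trace := by
    intro B
    have hBA : (Bᵀ * A).trace = (Aᵀ * B).trace := by
      rw [← Matrix.trace_transpose (Aᵀ * B)]
      simp [Matrix.transpose_mul]
    simp only [Matrix.transpose_sub, Matrix.sub_mul, Matrix.mul_sub, Matrix.trace_sub]
    linarith
  -- the two "B" matrices have BᵀB = 1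
  have hUV2 : (U * Vᵀ)ᵀ * (U * Vᵀ) = 1 := by
    simp only [Matrix.transpose_mul, Matrix.transpose_transpose, Matrix.mul_assoc]
    rw [cancel_left' hU2, hV1]
  have key : ((A - U * Vᵀ)ᵀ * (A - U * Vᵀ)).trace ≤ ((A - R)ᵀ * (A - R)).trace := by
    rw [expand, expand, hUV2, hR2, heq]
    linarith
  unfold frobNorm
  rw [sqsum_eq_trace, sqsum_eq_trace]
  exact Real.sqrt_le_sqrt key
end

section
/- Let A ∈ ℝ^{3×3} be invertible with SVD A = UΣVᵀ, singular values σ₁ ≥ σ₂ ≥ σ₃ > 0. Define R = UVᵀ if det(A) > 0, and R = U·diag(1,1,−1)·Vᵀ otherwise. Then R ∈ SO(3), and R minimizes ‖A − Q‖_F over all Q ∈ SO(3). -/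
/-!
For orthogonal `Q`, `‖A - Q‖_F² = ‖A‖_F² + 3 - 2 tr(AᵀQ)`, so minimizing over `SO(3)` means
maximizing `tr(AᵀQ) = tr(Σ W)`, where `W = UᵀQV` is orthogonal with `det W = det U · det V`.
Abel summation along the antitone `σ` bounds `∑ σᵢ Wᵢᵢ` by `σ₀ + σ₁ + det W · σ₂`, using
`Wᵢᵢ ≤ 1` and `tr W ≤ 2 + det W`. For `det W = -1` the latter holds because `det (W + 1) =
det W · det (W + 1)` forces a unit vector `u` with `W u = -u`: composing `W` with the Householder
reflection in `u` gives an orthogonal matrix of trace `tr W + 2 ≤ 3`. Finally `UᵀRV = diag(1, 1, det U · det V)` attains the bound.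
-/

open Matrix

namespace Matrix

lemma sum_sq_entries_eq_trace {m n R : Type*} [Fintype m] [Fintype n] [CommSemiring R]
    (M : Matrix m n R) : ∑ i, ∑ j, M i j ^ 2 = (Mᵀ * M).trace := by
  simp only [trace, diag, mul_apply, transpose_apply, sq]
  exact Finset.sum_comm

lemma trace_transpose_mul_eq {n R : Type*} [Fintype n] [CommSemiring R] (U M V Q : Matrix n n R) :
    ((U * M * Vᵀ)ᵀ * Q).trace = (Mᵀ * (Uᵀ * Q * V)).trace := by
  simp only [transpose_mul, transpose_transpose, Matrix.mul_assoc]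
  rw [trace_mul_comm]
  simp only [Matrix.mul_assoc]

variable {n : Type*} [Fintype n] [DecidableEq n] {U V W : Matrix n n ℝ}

lemma det_mul_self_of_mem_orthogonalGroup (hW : W ∈ orthogonalGroup n ℝ) :
    W.det * W.det = 1 :=
  (det_of_mem_unitary hW).1

lemma diag_le_one_of_mem_orthogonalGroup (hW : W ∈ orthogonalGroup n ℝ) (i : n) :
    W i i ≤ 1 :=
  (abs_le.1 (entry_norm_bound_of_unitary hW i i)).2

lemma trace_le_card_of_mem_orthogonalGroup (hW : W ∈ orthogonalGroup n ℝ) :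
    W.trace ≤ Fintype.card n :=
  calc W.trace = ∑ i, W i i := rfl
    _ ≤ ∑ _i : n, (1 : ℝ) := Finset.sum_le_sum fun i _ => diag_le_one_of_mem_orthogonalGroup hW i
    _ = Fintype.card n := by simp

lemma exists_mulVec_eq_neg_self_of_det_eq_neg_one (hW : W ∈ orthogonalGroup n ℝ)
    (hdet : W.det = -1) : ∃ u, W *ᵥ u = -u ∧ u ⬝ᵥ u = 1 := by
  have hsing : (W + 1).det = 0 := by
    have h : Wᵀ * (W + 1) = (W + 1)ᵀ := by
      rw [mul_add, (mem_orthogonalGroup_iff' n ℝ).1 hW, transpose_add, transpose_one, mul_one,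
        add_comm]
    have := congrArg det h
    rw [det_mul, det_transpose, det_transpose, hdet] at this
    linarith
  obtain ⟨v, hv0, hv⟩ := exists_mulVec_eq_zero_iff.2 hsing
  have hWv : W *ᵥ v = -v := eq_neg_of_add_eq_zero_left (by rwa [add_mulVec, one_mulVec] at hv)
  have hvv : 0 < v ⬝ᵥ v := dotProduct_self_star_pos_iff.2 hv0
  refine ⟨(√(v ⬝ᵥ v))⁻¹ • v, by rw [mulVec_smul, hWv, smul_neg], ?_⟩
  rw [smul_dotProduct, dotProduct_smul, smul_smul, smul_eq_mul, ← mul_inv,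
    Real.mul_self_sqrt hvv.le, inv_mul_cancel₀ hvv.ne']

lemma householder_mem_orthogonalGroup {u : n → ℝ} (hu : u ⬝ᵥ u = 1) :
    1 - (2 : ℝ) • vecMulVec u u ∈ orthogonalGroup n ℝ := by
  have h : vecMulVec u u * vecMulVec u u = vecMulVec u u := by
    rw [vecMulVec_mul_vecMulVec, hu, one_smul]
  rw [mem_orthogonalGroup_iff, transpose_sub, transpose_one, transpose_smul, transpose_vecMulVec]
  simp only [sub_mul, mul_sub, one_mul, mul_one, smul_mul_assoc, mul_smul_comm, h]
  module

lemma trace_le_card_sub_two_of_det_eq_neg_one (hW : W ∈ orthogonalGroup n ℝ)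
    (hdet : W.det = -1) : W.trace ≤ Fintype.card n - 2 := by
  obtain ⟨u, hWu, hu⟩ := exists_mulVec_eq_neg_self_of_det_eq_neg_one hW hdet
  have htr : (W * (1 - (2 : ℝ) • vecMulVec u u)).trace = W.trace + 2 := by
    rw [mul_sub, mul_one, mul_smul_comm, mul_vecMulVec, hWu, trace_sub, trace_smul,
      trace_vecMulVec, neg_dotProduct, hu, smul_eq_mul]
    ring
  have := trace_le_card_of_mem_orthogonalGroup (mul_mem hW (householder_mem_orthogonalGroup hu))
  linarith

lemma trace_le_card_sub_one_add_det (hW : W ∈ orthogonalGroup n ℝ) :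
    W.trace ≤ Fintype.card n - 1 + W.det := by
  rcases mul_self_eq_one_iff.1 (det_mul_self_of_mem_orthogonalGroup hW) with h | h
  · linarith [trace_le_card_of_mem_orthogonalGroup hW]
  · linarith [trace_le_card_sub_two_of_det_eq_neg_one hW h]

lemma diagonal_mem_orthogonalGroup {d : n → ℝ} (hd : ∀ i, d i * d i = 1) :
    diagonal d ∈ orthogonalGroup n ℝ := by
  rw [mem_orthogonalGroup_iff, diagonal_transpose, diagonal_mul_diagonal, ← diagonal_one]
  exact congrArg diagonal (funext hd)

lemma mul_mul_transpose_mem_specialOrthogonalGroup {D : Matrix n n ℝ}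
    (hU : U ∈ orthogonalGroup n ℝ) (hV : V ∈ orthogonalGroup n ℝ) (hD : D ∈ orthogonalGroup n ℝ)
    (hdet : D.det = U.det * V.det) : U * D * Vᵀ ∈ specialOrthogonalGroup n ℝ := by
  refine mem_specialOrthogonalGroup_iff.2
    ⟨mul_mem (mul_mem hU hD) (transpose_mem_unitaryGroup_iff.2 hV), ?_⟩
  rw [det_mul, det_mul, det_transpose, hdet]
  linear_combination (V.det * V.det) * det_mul_self_of_mem_orthogonalGroup hU +
    det_mul_self_of_mem_orthogonalGroup hV

lemma trace_transpose_mul_of_mem_orthogonalGroup (hU : U ∈ orthogonalGroup n ℝ)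
    (hV : V ∈ orthogonalGroup n ℝ) (M N : Matrix n n ℝ) :
    ((U * M * Vᵀ)ᵀ * (U * N * Vᵀ)).trace = (Mᵀ * N).trace := by
  rw [trace_transpose_mul_eq, Matrix.mul_assoc, Matrix.mul_assoc,
    (mem_orthogonalGroup_iff' n ℝ).1 hV, mul_one, ← Matrix.mul_assoc Uᵀ,
    (mem_orthogonalGroup_iff' n ℝ).1 hU, one_mul]

lemma sum_sq_entries_sub_of_mem_orthogonalGroup (A : Matrix n n ℝ) {Q : Matrix n n ℝ}
    (hQ : Q ∈ orthogonalGroup n ℝ) :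
    ∑ i, ∑ j, (A - Q) i j ^ 2 = ∑ i, ∑ j, A i j ^ 2 + Fintype.card n - 2 * (Aᵀ * Q).trace := by
  rw [sum_sq_entries_eq_trace, sum_sq_entries_eq_trace, transpose_sub, sub_mul, mul_sub, mul_sub,
    (mem_orthogonalGroup_iff' n ℝ).1 hQ, trace_sub, trace_sub, trace_sub, trace_one,
    ← trace_transpose (Qᵀ * A), transpose_mul, transpose_transpose]
  ring

lemma trace_diagonal_mul_le {σ : Fin 3 → ℝ} (hσ : Antitone σ) (hσ₂ : 0 ≤ σ 2)
    {W : Matrix (Fin 3) (Fin 3) ℝ} (hW : W ∈ orthogonalGroup (Fin 3) ℝ) :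
    (diagonal σ * W).trace ≤ σ 0 + σ 1 + W.det * σ 2 := by
  have h₀ := diag_le_one_of_mem_orthogonalGroup hW 0
  have h₁ := diag_le_one_of_mem_orthogonalGroup hW 1
  have htr := trace_le_card_sub_one_add_det hW
  have hσ₀₁ : σ 1 ≤ σ 0 := hσ (by decide)
  have hσ₁₂ : σ 2 ≤ σ 1 := hσ (by decide)
  simp only [trace, diag, diagonal_mul, Fin.sum_univ_three, Fintype.card_fin,
    Nat.cast_ofNat] at htr ⊢
  -- Abel summation: `∑ σᵢ Wᵢᵢ = (σ₀ - σ₁) W₀₀ + (σ₁ - σ₂)(W₀₀ + W₁₁) + σ₂ tr W`.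
  linarith [mul_le_mul_of_nonneg_left h₀ (sub_nonneg.2 hσ₀₁),
    mul_le_mul_of_nonneg_left (add_le_add h₀ h₁) (sub_nonneg.2 hσ₁₂),
    mul_le_mul_of_nonneg_left htr hσ₂]

lemma trace_transpose_mul_le {σ : Fin 3 → ℝ} (hσ : Antitone σ) (hσ₂ : 0 ≤ σ 2)
    {U V Q : Matrix (Fin 3) (Fin 3) ℝ} (hU : U ∈ orthogonalGroup (Fin 3) ℝ)
    (hV : V ∈ orthogonalGroup (Fin 3) ℝ) (hQ : Q ∈ specialOrthogonalGroup (Fin 3) ℝ) :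
    ((U * diagonal σ * Vᵀ)ᵀ * Q).trace ≤ σ 0 + σ 1 + U.det * V.det * σ 2 := by
  obtain ⟨hQO, hQdet⟩ := mem_specialOrthogonalGroup_iff.1 hQ
  have hW : Uᵀ * Q * V ∈ orthogonalGroup (Fin 3) ℝ :=
    mul_mem (mul_mem (transpose_mem_unitaryGroup_iff.2 hU) hQO) hV
  have hdetW : (Uᵀ * Q * V).det = U.det * V.det := by
    rw [det_mul, det_mul, det_transpose, hQdet, mul_one]
  rw [trace_transpose_mul_eq, diagonal_transpose, ← hdetW]
  exact trace_diagonal_mul_le hσ hσ₂ hW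

end Matrix

lemma frobNorm_sub_le_of_trace_le {m : ℕ} (A : Matrix (Fin m) (Fin m) ℝ)
    {Q R : Matrix (Fin m) (Fin m) ℝ} (hQ : Q ∈ orthogonalGroup (Fin m) ℝ)
    (hR : R ∈ orthogonalGroup (Fin m) ℝ) (h : (Aᵀ * Q).trace ≤ (Aᵀ * R).trace) :
    frobNorm (A - R) ≤ frobNorm (A - Q) := by
  refine Real.sqrt_le_sqrt ?_
  rw [sum_sq_entries_sub_of_mem_orthogonalGroup A hQ,
    sum_sq_entries_sub_of_mem_orthogonalGroup A hR]
  linarith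

theorem svd_special_orthogonal_projection_general
    (A U V : Matrix (Fin 3) (Fin 3) ℝ) (σ : Fin 3 → ℝ)
    (hU : U ∈ Matrix.orthogonalGroup (Fin 3) ℝ)
    (hV : V ∈ Matrix.orthogonalGroup (Fin 3) ℝ)
    (hσpos : ∀ i, 0 < σ i) (hσdec : Antitone σ)
    (hA : A = U * Matrix.diagonal σ * Vᵀ)
    (R : Matrix (Fin 3) (Fin 3) ℝ)
    (hR : R = if 0 < A.det then U * Vᵀ else U * Matrix.diagonal ![1, 1, -1] * Vᵀ) :
    R ∈ Matrix.specialOrthogonalGroup (Fin 3) ℝ ∧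
      ∀ Q ∈ Matrix.specialOrthogonalGroup (Fin 3) ℝ,
        frobNorm (A - R) ≤ frobNorm (A - Q) := by
  set s := U.det * V.det
  have hs : s = 1 ∨ s = -1 := mul_self_eq_one_iff.1 <| by
    linear_combination (V.det * V.det) * det_mul_self_of_mem_orthogonalGroup hU +
      det_mul_self_of_mem_orthogonalGroup hV
  have hRD : R = U * diagonal ![1, 1, s] * Vᵀ := by
    have hdetA : A.det = s * ∏ i, σ i := by
      rw [hA, det_mul, det_mul, det_diagonal, det_transpose]; ring
    have hprod : 0 < ∏ i, σ i := Finset.prod_pos fun i _ => hσpos i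
    rcases hs with hs | hs <;> rw [hR, hs]
    · have hone : diagonal ![(1 : ℝ), 1, 1] = 1 := by
        rw [← diagonal_one]; congr; ext i; fin_cases i <;> rfl
      rw [if_pos (by rw [hdetA, hs]; linarith), hone, mul_one]
    · rw [if_neg (by rw [hdetA, hs]; linarith)]
  have hD : diagonal ![1, 1, s] ∈ orthogonalGroup (Fin 3) ℝ :=
    diagonal_mem_orthogonalGroup fun i => by rcases hs with hs | hs <;> fin_cases i <;> simp [hs]
  have hRO : R ∈ specialOrthogonalGroup (Fin 3) ℝ := hRD ▸
    mul_mul_transpose_mem_specialOrthogonalGroup hU hV hD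
      (by simp [det_diagonal, Fin.prod_univ_three, s])
  refine ⟨hRO, fun Q hQ => frobNorm_sub_le_of_trace_le A hQ.1 hRO.1 ?_⟩
  calc (Aᵀ * Q).trace ≤ σ 0 + σ 1 + s * σ 2 :=
        hA ▸ trace_transpose_mul_le hσdec (hσpos 2).le hU hV hQ
    _ = (Aᵀ * R).trace := by
      rw [hA, hRD, trace_transpose_mul_of_mem_orthogonalGroup hU hV, diagonal_transpose,
        diagonal_mul_diagonal, trace_diagonal, Fin.sum_univ_three]
      simp only [cons_val_zero, cons_val_one, cons_val_two, head_cons, tail_cons]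
      ring

/-- For an invertible `A ∈ ℝ^{3×3}` with SVD `A = UΣVᵀ`
(`σ₁ ≥ σ₂ ≥ σ₃ > 0`), the matrix `R = UVᵀ` if `det A > 0` and
`R = U·diag(1,1,−1)·Vᵀ` otherwise lies in `SO(3)` and minimizes `‖A − Q‖_F`
over `Q ∈ SO(3)`. -/
theorem svd_special_orthogonal_projection
    (A U V : Matrix (Fin 3) (Fin 3) ℝ) (σ : Fin 3 → ℝ)
    (hA_inv : IsUnit A)
    (hU : U ∈ Matrix.orthogonalGroup (Fin 3) ℝ)
    (hV : V ∈ Matrix.orthogonalGroup (Fin 3) ℝ)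
    (hσpos : ∀ i, 0 < σ i) (hσdec : Antitone σ)
    (hA : A = U * Matrix.diagonal σ * Vᵀ)
    (R : Matrix (Fin 3) (Fin 3) ℝ)
    (hR : R = if 0 < A.det then U * Vᵀ else U * Matrix.diagonal ![1, 1, -1] * Vᵀ) :
    R ∈ Matrix.specialOrthogonalGroup (Fin 3) ℝ ∧
      ∀ Q ∈ Matrix.specialOrthogonalGroup (Fin 3) ℝ,
        frobNorm (A - R) ≤ frobNorm (A - Q) :=
  svd_special_orthogonal_projection_general A U V σ hU hV hσpos hσdec hA R hR
end
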